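/- For random variables Θ (taking finitely many values θ_1,…,θ_m) and X, and an observation Y such that the conditional density of Y given (Θ, X) equals L(Y | X) (not depending on Θ), the conditional probability satisfies P(Θ = θ, X ∈ A | Y) = E[ P(Θ = θ | X) · 1_{X ∈ A} · L(Y|X) ] / E[ L(Y|X) ], provided E[L(Y|X)] > 0. -/

import Mathlib

/-!
Summing the density identity over the finitely many values of `Θ` shows that
`∫ L(y|X) dλ(y) = 1` almost surely, so that `(ω, y) ↦ L(y|X ω)` is `μ ⊗ λ`-integrable, and that
`Y` has density `y ↦ E[L(y|X)]` with respect to `λ`. By the pull-out property `P(Θ = θ | X)` may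
replace the indicator of `{Θ = θ}` in the density identity, and Fubini turns it into
`P(Θ = θ, X ∈ A, Y ∈ B) = ∫_B E[P(Θ = θ | X) 1_A(X) L(y|X)] dλ(y)`. The conditional probability
given `Y` is the ratio of these two densities of `Y`.
-/

open MeasureTheory ProbabilityTheory Filter Function

lemma integral_condExp_mul_of_stronglyMeasurable {Ω : Type*} {m m₀ : MeasurableSpace Ω}
    {μ : Measure Ω} (hm : m ≤ m₀) [SigmaFinite (μ.trim hm)] {f g : Ω → ℝ}
    (hg : StronglyMeasurable[m] g) (hfg : Integrable (f * g) μ) (hf : Integrable f μ) :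
    ∫ ω, μ[f | m] ω * g ω ∂μ = ∫ ω, f ω * g ω ∂μ := by
  calc ∫ ω, μ[f | m] ω * g ω ∂μ = ∫ ω, μ[f * g | m] ω ∂μ :=
        integral_congr_ae (condExp_mul_of_stronglyMeasurable_right hg hfg hf).symm
    _ = ∫ ω, f ω * g ω ∂μ := integral_condExp hm

lemma ae_condExp_indicator_mul_indicator_comp_mem_Icc {Ω E : Type*} {m m₀ : MeasurableSpace Ω}
    {μ : Measure Ω} [IsFiniteMeasure μ] (hm : m ≤ m₀) {s : Set Ω} (hs : MeasurableSet[m₀] s)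
    (X : Ω → E) (A : Set E) :
    ∀ᵐ ω ∂μ, μ[s.indicator (fun _ => (1 : ℝ)) | m] ω * A.indicator (fun _ => 1) (X ω)
      ∈ Set.Icc 0 1 := by
  have hle : μ[s.indicator (fun _ => (1 : ℝ)) | m] ≤ᵐ[μ] μ[fun _ => (1 : ℝ) | m] :=
    condExp_mono ((integrable_const 1).indicator hs) (integrable_const 1)
      (ae_of_all _ (Set.indicator_le_self' fun _ _ => zero_le_one' ℝ))
  rw [condExp_const hm] at hle
  have hnonneg : 0 ≤ᵐ[μ] μ[s.indicator (fun _ => (1 : ℝ)) | m] :=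
    condExp_nonneg (ae_of_all _ (Set.indicator_nonneg fun _ _ => zero_le_one' ℝ))
  filter_upwards [hnonneg, hle] with ω hp0 hp1
  have hind : A.indicator (fun _ => (1 : ℝ)) (X ω) ∈ Set.Icc 0 1 := by
    by_cases hXA : X ω ∈ A <;> simp [hXA]
  exact ⟨mul_nonneg hp0 hind.1, mul_le_one₀ hp1 hind.1 hind.2⟩

section

variable {Ω F : Type*} [MeasurableSpace Ω] [MeasurableSpace F] {μ : Measure Ω}

/-- The Bochner integral of a non-integrable function is `0`, so the identity forces `μ s = 0`. -/
lemma integrableOn_of_measureReal_eq_setIntegral [IsFiniteMeasure μ] {s : Set Ω} {g : Ω → ℝ}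
    (h : μ.real s = ∫ ω in s, g ω ∂μ) : IntegrableOn g s μ := by
  by_contra hg
  rw [integral_undef hg, measureReal_eq_zero_iff] at h
  exact hg (by simp [IntegrableOn, Measure.restrict_eq_zero.mpr h])

lemma measureReal_eq_setIntegral_of_fibers {S : Type*} [Finite S] [MeasurableSpace S]
    [MeasurableSingletonClass S] [IsFiniteMeasure μ] {Θ : Ω → S} (hΘ : Measurable Θ)
    {s t : Set Ω} (hs : MeasurableSet s) (ht : MeasurableSet t) {g : Ω → ℝ}
    (hg : IntegrableOn g t μ)
    (h : ∀ θ, μ.real (Θ ⁻¹' {θ} ∩ s) = ∫ ω in Θ ⁻¹' {θ} ∩ t, g ω ∂μ) :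
    μ.real s = ∫ ω in t, g ω ∂μ := by
  have : Fintype S := Fintype.ofFinite S
  have hunion (u : Set Ω) : ⋃ θ, Θ ⁻¹' {θ} ∩ u = u := by ext; simp
  have hdisj (u : Set Ω) : Pairwise (Disjoint on fun θ => Θ ⁻¹' {θ} ∩ u) :=
    fun _ _ hne => (pairwise_disjoint_fiber Θ hne).mono Set.inter_subset_left Set.inter_subset_left
  have hmeas (u : Set Ω) (hu : MeasurableSet u) (θ : S) : MeasurableSet (Θ ⁻¹' {θ} ∩ u) :=
    (hΘ (measurableSet_singleton θ)).inter hu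
  calc μ.real s = ∑ θ, μ.real (Θ ⁻¹' {θ} ∩ s) := by
        conv_lhs => rw [← hunion s]
        exact measureReal_iUnion_fintype (hdisj s) (hmeas s hs)
    _ = ∑ θ, ∫ ω in Θ ⁻¹' {θ} ∩ t, g ω ∂μ := by simp_rw [h]
    _ = ∫ ω in t, g ω ∂μ := by
        conv_rhs => rw [← hunion t]
        exact (integral_iUnion_fintype (hmeas t ht) (hdisj t)
          fun θ => hg.mono_set Set.inter_subset_right).symm

lemma integral_mul_mem_Icc {φ g : Ω → ℝ} (hg : Integrable g μ) (hg0 : 0 ≤ᵐ[μ] g)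
    (hφ : AEStronglyMeasurable φ μ) (hφ01 : ∀ᵐ ω ∂μ, φ ω ∈ Set.Icc 0 1) :
    ∫ ω, φ ω * g ω ∂μ ∈ Set.Icc 0 (∫ ω, g ω ∂μ) := by
  have hφ_le : ∀ᵐ ω ∂μ, ‖φ ω‖ ≤ 1 := by
    filter_upwards [hφ01] with ω h
    rw [Real.norm_of_nonneg h.1]
    exact h.2
  refine ⟨integral_nonneg_of_ae ?_, integral_mono_ae (hg.bdd_mul hφ hφ_le) hg ?_⟩
  · filter_upwards [hφ01, hg0] with ω h h0 using mul_nonneg h.1 h0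
  · filter_upwards [hφ01, hg0] with ω h h0 using mul_le_of_le_one_left h0 h.2

theorem condExp_comap_ae_eq_div_of_map_eq_withDensity [IsFiniteMeasure μ] {Y : Ω → F}
    (hY : Measurable Y) {ν : Measure F} {n d : F → ℝ} (hn : Measurable n) (hd : Measurable d)
    (hmap : μ.map Y = ν.withDensity fun y => ENNReal.ofReal (d y))
    (hnd : ∀ᵐ y ∂ν, n y ∈ Set.Icc 0 (d y)) {f : Ω → ℝ} (hf : Integrable f μ)
    (hfn : ∀ B, MeasurableSet B → ∫ ω in Y ⁻¹' B, f ω ∂μ = ∫ y in B, n y ∂ν) :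
    μ[f | MeasurableSpace.comap Y inferInstance] =ᵐ[μ] fun ω => n (Y ω) / d (Y ω) := by
  have hratio : Measurable fun y => n y / d y := hn.div hd
  have hratio_le : ∀ᵐ ω ∂μ, ‖n (Y ω) / d (Y ω)‖ ≤ 1 := by
    refine ae_of_ae_map (p := fun y => ‖n y / d y‖ ≤ 1) hY.aemeasurable ?_
    rw [hmap]
    filter_upwards [(withDensity_absolutelyContinuous ν _).ae_le hnd] with y ⟨hn0, hle⟩
    rw [Real.norm_of_nonneg (div_nonneg hn0 (hn0.trans hle))]
    exact div_le_one_of_le₀ hle (hn0.trans hle)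
  have hint : Integrable (fun ω => n (Y ω) / d (Y ω)) μ :=
    .of_bound (hratio.comp hY).aestronglyMeasurable 1 hratio_le
  refine (ae_eq_condExp_of_forall_setIntegral_eq hY.comap_le hf (fun _ _ _ => hint.integrableOn)
    ?_ (hratio.comp (comap_measurable Y)).aestronglyMeasurable).symm
  rintro _ ⟨B, hB, rfl⟩ -
  calc ∫ ω in Y ⁻¹' B, n (Y ω) / d (Y ω) ∂μ = ∫ y in B, n y / d y ∂(μ.map Y) :=
        (setIntegral_map hB hratio.aestronglyMeasurable hY.aemeasurable).symm
    _ = ∫ y in B, (ENNReal.ofReal (d y)).toReal • (n y / d y) ∂ν := by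
        rw [hmap, restrict_withDensity hB,
          integral_withDensity_eq_integral_toReal_smul hd.ennreal_ofReal (by simp)]
    _ = ∫ y in B, n y ∂ν := by
        refine integral_congr_ae (ae_restrict_of_ae ?_)
        filter_upwards [hnd] with y ⟨hn0, hle⟩
        rw [ENNReal.toReal_ofReal (hn0.trans hle), smul_eq_mul]
        -- where `d y = 0` also `n y = 0`, so the junk value `n y / 0 = 0` does no harm
        rcases (hn0.trans hle).eq_or_lt with hd0 | hd0
        · simp [← hd0, le_antisymm (hd0 ▸ hle) hn0]
        · exact mul_div_cancel₀ _ hd0.ne'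
    _ = ∫ ω in Y ⁻¹' B, f ω ∂μ := (hfn B hB).symm

end

lemma setIntegral_integral_mul_swap {α β : Type*} [MeasurableSpace α] [MeasurableSpace β]
    {μ : Measure α} {ν : Measure β} [SFinite μ] [SFinite ν] {K : α → β → ℝ}
    (hK : Integrable (uncurry K) (μ.prod ν)) {φ : α → ℝ} (hφ : AEStronglyMeasurable φ μ) {C : ℝ}
    (hφC : ∀ᵐ a ∂μ, ‖φ a‖ ≤ C) (B : Set β) :
    ∫ b in B, ∫ a, φ a * K a b ∂μ ∂ν = ∫ a, φ a * ∫ b in B, K a b ∂ν ∂μ := by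
  have hKB : Integrable (uncurry K) (μ.prod (ν.restrict B)) :=
    hK.mono_measure (Measure.prod_mono le_rfl Measure.restrict_le_self)
  have hφK : Integrable (uncurry fun a b => φ a * K a b) (μ.prod (ν.restrict B)) :=
    hKB.bdd_mul (hφ.comp_quasiMeasurePreserving Measure.quasiMeasurePreserving_fst)
      (Measure.quasiMeasurePreserving_fst.ae hφC)
  simp_rw [← integral_integral_swap hφK, integral_const_mul]

lemma measurable_integral_mul_comp {Ω E F : Type*} [MeasurableSpace Ω] [MeasurableSpace E]
    [MeasurableSpace F] {μ : Measure Ω} [SFinite μ] {X : Ω → E} {L : F → E → ℝ}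
    (hX : Measurable X) (hL : Measurable (uncurry L))
    {φ : Ω → ℝ} (hφ : Measurable φ) :
    Measurable fun y => ∫ ω, φ ω * L y (X ω) ∂μ :=
  ((hφ.comp measurable_fst).mul (hL.comp (measurable_snd.prodMk (hX.comp measurable_fst)))
    ).stronglyMeasurable.integral_prod_left'.measurable

def IsCondDensity {Ω E S F : Type*} [MeasurableSpace Ω] [MeasurableSpace E] [MeasurableSpace F]
    (μ : Measure Ω) (Θ : Ω → S) (X : Ω → E) (Y : Ω → F) (lam : Measure F) (L : F → E → ℝ) :
    Prop :=
  ∀ θ A B, MeasurableSet A → MeasurableSet B →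
    μ.real (Θ ⁻¹' {θ} ∩ X ⁻¹' A ∩ Y ⁻¹' B) =
      ∫ ω in Θ ⁻¹' {θ} ∩ X ⁻¹' A, ∫ y in B, L y (X ω) ∂lam ∂μ

namespace IsCondDensity

variable {Ω E S F : Type*} [MeasurableSpace Ω] [MeasurableSpace E] [MeasurableSpace F]
  {μ : Measure Ω} {Θ : Ω → S} {X : Ω → E} {Y : Ω → F} {lam : Measure F} {L : F → E → ℝ}

lemma of_integral_indicator_mul [MeasurableSpace S] [MeasurableSingletonClass S]
    (hΘ : Measurable Θ) (hX : Measurable X)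
    (h : ∀ (θ : S) (A : Set E) (B : Set F), MeasurableSet A → MeasurableSet B →
      (μ {ω | Θ ω = θ ∧ X ω ∈ A ∧ Y ω ∈ B}).toReal
        = ∫ ω, Set.indicator {ω' | Θ ω' = θ ∧ X ω' ∈ A} (fun _ => (1:ℝ)) ω
            * (∫ y in B, L y (X ω) ∂lam) ∂μ) :
    IsCondDensity μ Θ X Y lam L := by
  intro θ A B hA hB
  have hset : MeasurableSet (Θ ⁻¹' {θ} ∩ X ⁻¹' A) := (hΘ (measurableSet_singleton θ)).inter (hX hA)
  have hevent : {ω | Θ ω = θ ∧ X ω ∈ A ∧ Y ω ∈ B} = Θ ⁻¹' {θ} ∩ X ⁻¹' A ∩ Y ⁻¹' B := by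
    ext ω
    simp [and_assoc]
  rw [measureReal_def, ← hevent, h θ A B hA hB, ← integral_indicator hset]
  congr 1 with ω
  by_cases hω : Θ ω = θ ∧ X ω ∈ A <;> simp [hω]

variable [IsFiniteMeasure μ]

lemma integrable_integral [Finite S] (h : IsCondDensity μ Θ X Y lam L) :
    Integrable (fun ω => ∫ y, L y (X ω) ∂lam) μ := by
  have hfiber (θ : S) : IntegrableOn (fun ω => ∫ y, L y (X ω) ∂lam) (Θ ⁻¹' {θ}) μ :=
    integrableOn_of_measureReal_eq_setIntegral (by simpa using h θ .univ .univ .univ .univ)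
  rw [← integrableOn_univ, ← Set.preimage_univ (f := Θ), ← Set.iUnion_of_singleton,
    Set.preimage_iUnion]
  exact integrableOn_finite_iUnion.mpr hfiber

lemma integral_ae_eq_one [Finite S] [MeasurableSpace S] [MeasurableSingletonClass S] [SFinite lam]
    (h : IsCondDensity μ Θ X Y lam L) (hΘ : Measurable Θ) (hX : Measurable X)
    (hL : Measurable (uncurry L)) :
    ∀ᵐ ω ∂μ, ∫ y, L y (X ω) ∂lam = 1 := by
  have hg : StronglyMeasurable fun x => ∫ y, L y x ∂lam := hL.stronglyMeasurable.integral_prod_left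
  refine ae_eq_of_forall_setIntegral_eq_of_sigmaFinite' hX.comap_le
    (fun _ _ _ => h.integrable_integral.integrableOn) (fun _ _ _ => integrableOn_const)
    ?_ (hg.comp_measurable (comap_measurable X)).aestronglyMeasurable
    stronglyMeasurable_const.aestronglyMeasurable
  rintro _ ⟨A, hA, rfl⟩ -
  rw [setIntegral_const, smul_eq_mul, mul_one]
  exact (measureReal_eq_setIntegral_of_fibers hΘ (hX hA) (hX hA)
    h.integrable_integral.integrableOn fun θ => by simpa using h θ A .univ hA .univ).symm

lemma integrable_prod [Finite S] [MeasurableSpace S] [MeasurableSingletonClass S] [SFinite lam]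
    (h : IsCondDensity μ Θ X Y lam L) (hΘ : Measurable Θ) (hX : Measurable X)
    (hL : Measurable (uncurry L)) (hL0 : ∀ y x, 0 ≤ L y x) :
    Integrable (fun p : Ω × F => L p.2 (X p.1)) (μ.prod lam) := by
  have hmeas : Measurable fun p : Ω × F => L p.2 (X p.1) :=
    hL.comp (measurable_snd.prodMk (hX.comp measurable_fst))
  refine (integrable_prod_iff hmeas.aestronglyMeasurable).mpr ⟨?_, ?_⟩
  · filter_upwards [h.integral_ae_eq_one hΘ hX hL] with ω hω
    exact .of_integral_ne_zero (by simp [hω])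
  · simpa only [Real.norm_of_nonneg (hL0 _ _)] using h.integrable_integral

lemma integrable_setIntegral [Finite S] [MeasurableSpace S] [MeasurableSingletonClass S]
    [SFinite lam] (h : IsCondDensity μ Θ X Y lam L) (hΘ : Measurable Θ) (hX : Measurable X)
    (hL : Measurable (uncurry L)) (hL0 : ∀ y x, 0 ≤ L y x) (B : Set F) :
    Integrable (fun ω => ∫ y in B, L y (X ω) ∂lam) μ :=
  ((h.integrable_prod hΘ hX hL hL0).mono_measure
    (Measure.prod_mono le_rfl Measure.restrict_le_self)).integral_prod_left

lemma map_eq_withDensity [Finite S] [MeasurableSpace S] [MeasurableSingletonClass S]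
    [SFinite lam] (h : IsCondDensity μ Θ X Y lam L) (hΘ : Measurable Θ) (hX : Measurable X)
    (hY : Measurable Y) (hL : Measurable (uncurry L)) (hL0 : ∀ y x, 0 ≤ L y x) :
    μ.map Y = lam.withDensity fun y => ENNReal.ofReal (∫ ω, L y (X ω) ∂μ) := by
  have hprod := h.integrable_prod hΘ hX hL hL0
  have hreal (B : Set F) (hB : MeasurableSet B) :
      μ.real (Y ⁻¹' B) = ∫ y in B, ∫ ω, L y (X ω) ∂μ ∂lam := by
    have hswap := setIntegral_integral_mul_swap (K := fun ω y => L y (X ω)) hprod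
      (φ := fun _ => 1) aestronglyMeasurable_const (C := 1) (by simp) B
    simp only [one_mul] at hswap
    rw [hswap, ← setIntegral_univ]
    exact measureReal_eq_setIntegral_of_fibers hΘ (hY hB) .univ
      (h.integrable_setIntegral hΘ hX hL hL0 B).integrableOn
      fun θ => by simpa using h θ .univ B .univ hB
  ext B hB
  rw [Measure.map_apply hY hB, withDensity_apply _ hB, ← ofReal_measureReal, hreal B hB,
    ofReal_integral_eq_lintegral_ofReal hprod.integral_prod_right.integrableOn
      (ae_of_all _ fun y => integral_nonneg fun ω => hL0 y (X ω))]

lemma ae_integral_mul_mem_Icc [Finite S] [MeasurableSpace S] [MeasurableSingletonClass S]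
    [SFinite lam] (h : IsCondDensity μ Θ X Y lam L) (hΘ : Measurable Θ) (hX : Measurable X)
    (hL : Measurable (uncurry L)) (hL0 : ∀ y x, 0 ≤ L y x) {φ : Ω → ℝ}
    (hφ : AEStronglyMeasurable φ μ) (hφ01 : ∀ᵐ ω ∂μ, φ ω ∈ Set.Icc 0 1) :
    ∀ᵐ y ∂lam, ∫ ω, φ ω * L y (X ω) ∂μ ∈ Set.Icc 0 (∫ ω, L y (X ω) ∂μ) :=
  (h.integrable_prod hΘ hX hL hL0).prod_left_ae.mono fun y hy =>
    integral_mul_mem_Icc hy (ae_of_all _ fun ω => hL0 y (X ω)) hφ hφ01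

lemma integral_condExp_mul [Finite S] [MeasurableSpace S] [MeasurableSingletonClass S]
    [SFinite lam] (h : IsCondDensity μ Θ X Y lam L) (hΘ : Measurable Θ) (hX : Measurable X)
    (hL : Measurable (uncurry L)) (hL0 : ∀ y x, 0 ≤ L y x) (θ : S) {A : Set E} {B : Set F}
    (hA : MeasurableSet A) (hB : MeasurableSet B) :
    ∫ ω, μ[{ω' | Θ ω' = θ}.indicator (fun _ => (1 : ℝ)) | MeasurableSpace.comap X inferInstance] ω
        * A.indicator (fun _ => 1) (X ω) * ∫ y in B, L y (X ω) ∂lam ∂μ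
      = μ.real (Θ ⁻¹' {θ} ∩ X ⁻¹' A ∩ Y ⁻¹' B) := by
  have hfiber : MeasurableSet {ω' | Θ ω' = θ} := hΘ (measurableSet_singleton θ)
  have hset : MeasurableSet (Θ ⁻¹' {θ} ∩ X ⁻¹' A) := hfiber.inter (hX hA)
  have hint := h.integrable_setIntegral hΘ hX hL hL0 B
  set g : E → ℝ := fun x => A.indicator (fun _ => 1) x * ∫ y in B, L y x ∂lam
  have hg : StronglyMeasurable[MeasurableSpace.comap X inferInstance] (g ∘ X) :=
    ((stronglyMeasurable_const.indicator hA).mul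
      hL.stronglyMeasurable.integral_prod_left).comp_measurable (comap_measurable X)
  have hprod : {ω' | Θ ω' = θ}.indicator (fun _ => (1 : ℝ)) * g ∘ X
      = (Θ ⁻¹' {θ} ∩ X ⁻¹' A).indicator fun ω => ∫ y in B, L y (X ω) ∂lam := by
    ext ω
    by_cases hθ : Θ ω = θ <;> by_cases hXA : X ω ∈ A <;> simp [g, hθ, hXA]
  have hpull := integral_condExp_mul_of_stronglyMeasurable hX.comap_le hg
    (hprod ▸ hint.indicator hset) ((integrable_const 1).indicator hfiber)
  simp only [mul_assoc]
  rw [h θ A B hA hB, ← integral_indicator hset, ← hprod]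
  exact hpull

lemma setIntegral_integral_condExp_mul [Finite S] [MeasurableSpace S]
    [MeasurableSingletonClass S] [SFinite lam] (h : IsCondDensity μ Θ X Y lam L)
    (hΘ : Measurable Θ) (hX : Measurable X) (hL : Measurable (uncurry L)) (hL0 : ∀ y x, 0 ≤ L y x)
    (θ : S) {A : Set E} {B : Set F} (hA : MeasurableSet A) (hB : MeasurableSet B) :
    ∫ y in B, ∫ ω, μ[{ω' | Θ ω' = θ}.indicator (fun _ => (1 : ℝ)) |
        MeasurableSpace.comap X inferInstance] ω * A.indicator (fun _ => 1) (X ω) * L y (X ω) ∂μ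
        ∂lam
      = μ.real (Θ ⁻¹' {θ} ∩ X ⁻¹' A ∩ Y ⁻¹' B) := by
  have hφ : AEStronglyMeasurable (fun ω => μ[{ω' | Θ ω' = θ}.indicator (fun _ => (1 : ℝ)) |
      MeasurableSpace.comap X inferInstance] ω * A.indicator (fun _ => 1) (X ω)) μ :=
    (stronglyMeasurable_condExp.mono hX.comap_le).aestronglyMeasurable.mul
      ((measurable_const.indicator hA).comp hX).aestronglyMeasurable
  have hφ_le : ∀ᵐ ω ∂μ, ‖μ[{ω' | Θ ω' = θ}.indicator (fun _ => (1 : ℝ)) |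
      MeasurableSpace.comap X inferInstance] ω * A.indicator (fun _ => 1) (X ω)‖ ≤ 1 := by
    filter_upwards [ae_condExp_indicator_mul_indicator_comp_mem_Icc (s := {ω' | Θ ω' = θ})
      hX.comap_le (hΘ (measurableSet_singleton θ)) X A] with ω hω
    rw [Real.norm_of_nonneg hω.1]
    exact hω.2
  rw [setIntegral_integral_mul_swap (K := fun ω y => L y (X ω)) (h.integrable_prod hΘ hX hL hL0)
    hφ hφ_le B, h.integral_condExp_mul hΘ hX hL hL0 θ hA hB]

end IsCondDensity

theorem stmt2_general {Ω E S F : Type*} [mΩ : MeasurableSpace Ω]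
    [MeasurableSpace E] [Fintype S] [MeasurableSpace S] [MeasurableSingletonClass S]
    [MeasurableSpace F]
    (μ : Measure Ω) [IsProbabilityMeasure μ]
    (Θ : Ω → S) (X : Ω → E) (Y : Ω → F)
    (hΘ : Measurable Θ) (hX : Measurable X) (hY : Measurable Y)
    (lam : Measure F) [SigmaFinite lam]
    (L : F → E → ℝ) (hL : Measurable (Function.uncurry L)) (hL0 : ∀ y x, 0 ≤ L y x)
    -- the conditional density of `Y` given `(Θ, X)` is `L(y|x)`, independent of `θ`:
    (hdens : ∀ (θ : S) (A : Set E) (B : Set F), MeasurableSet A → MeasurableSet B →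
      (μ {ω | Θ ω = θ ∧ X ω ∈ A ∧ Y ω ∈ B}).toReal
        = ∫ ω, Set.indicator {ω' | Θ ω' = θ ∧ X ω' ∈ A} (fun _ => (1:ℝ)) ω
            * (∫ y in B, L y (X ω) ∂lam) ∂μ)
    -- `q θ` is a version of `P(Θ = θ | X)`:
    (q : S → Ω → ℝ)
    (hq : ∀ θ : S, q θ =ᵐ[μ]
      μ[Set.indicator {ω' | Θ ω' = θ} (fun _ => (1:ℝ)) |
        MeasurableSpace.comap X inferInstance]) :
    ∀ (θ : S) (A : Set E), MeasurableSet A →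
      μ[Set.indicator {ω' | Θ ω' = θ ∧ X ω' ∈ A} (fun _ => (1:ℝ)) |
          MeasurableSpace.comap Y inferInstance]
        =ᵐ[μ]
      fun ω => (∫ ω', q θ ω' * Set.indicator A (fun _ => (1:ℝ)) (X ω') * L (Y ω) (X ω') ∂μ)
        / (∫ ω', L (Y ω) (X ω') ∂μ) := by
  intro θ A hA
  have h := IsCondDensity.of_integral_indicator_mul hΘ hX hdens
  set p := μ[{ω' | Θ ω' = θ}.indicator (fun _ => (1 : ℝ)) | MeasurableSpace.comap X inferInstance]
  set φ : Ω → ℝ := fun ω => p ω * A.indicator (fun _ => 1) (X ω)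
  have hφ : Measurable φ :=
    (stronglyMeasurable_condExp.mono hX.comap_le).measurable.mul
      ((measurable_const.indicator hA).comp hX)
  have hφ01 : ∀ᵐ ω ∂μ, φ ω ∈ Set.Icc 0 1 :=
    ae_condExp_indicator_mul_indicator_comp_mem_Icc hX.comap_le (hΘ (measurableSet_singleton θ)) X A
  have hversion : (fun ω => (∫ ω', q θ ω' * A.indicator (fun _ => 1) (X ω') * L (Y ω) (X ω') ∂μ)
        / ∫ ω', L (Y ω) (X ω') ∂μ)
      = fun ω => (∫ ω', φ ω' * L (Y ω) (X ω') ∂μ) / ∫ ω', L (Y ω) (X ω') ∂μ := by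
    ext ω
    congr 1
    exact integral_congr_ae (by filter_upwards [hq θ] with ω' hω' using by simp [φ, p, hω'])
  rw [hversion]
  have hset : MeasurableSet {ω' | Θ ω' = θ ∧ X ω' ∈ A} :=
    (hΘ (measurableSet_singleton θ)).inter (hX hA)
  refine condExp_comap_ae_eq_div_of_map_eq_withDensity hY (measurable_integral_mul_comp hX hL hφ)
    (by simpa using measurable_integral_mul_comp (μ := μ) hX hL (measurable_const (a := (1 : ℝ))))
    (h.map_eq_withDensity hΘ hX hY hL hL0)
    (h.ae_integral_mul_mem_Icc hΘ hX hL hL0 hφ.aestronglyMeasurable hφ01)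
    ((integrable_const 1).indicator hset) fun B hB => ?_
  rw [h.setIntegral_integral_condExp_mul hΘ hX hL hL0 θ hA hB, setIntegral_indicator hset,
    setIntegral_const, smul_eq_mul, mul_one, Set.inter_comm]
  rfl

/-- Bayes correction with Rao-Blackwellization: if the conditional density of the
observation `Y` given `(Θ, X)` is `L (Y·) (X·)`, not depending on `Θ`, then
`P(Θ = θ, X ∈ A | Y) = E[ P(Θ = θ | X) · 1_{X ∈ A} · L(Y|X) ] / E[ L(Y|X) ]` a.s. -/
theorem stmt2 {Ω E S F : Type*} [mΩ : MeasurableSpace Ω]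
    [MeasurableSpace E] [Fintype S] [MeasurableSpace S] [MeasurableSingletonClass S]
    [MeasurableSpace F]
    (μ : Measure Ω) [IsProbabilityMeasure μ]
    (Θ : Ω → S) (X : Ω → E) (Y : Ω → F)
    (hΘ : Measurable Θ) (hX : Measurable X) (hY : Measurable Y)
    (lam : Measure F) [SigmaFinite lam]
    (L : F → E → ℝ) (hL : Measurable (Function.uncurry L)) (hL0 : ∀ y x, 0 ≤ L y x)
    -- the conditional density of `Y` given `(Θ, X)` is `L(y|x)`, independent of `θ`:
    (hdens : ∀ (θ : S) (A : Set E) (B : Set F), MeasurableSet A → MeasurableSet B →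
      (μ {ω | Θ ω = θ ∧ X ω ∈ A ∧ Y ω ∈ B}).toReal
        = ∫ ω, Set.indicator {ω' | Θ ω' = θ ∧ X ω' ∈ A} (fun _ => (1:ℝ)) ω
            * (∫ y in B, L y (X ω) ∂lam) ∂μ)
    -- `q θ` is a version of `P(Θ = θ | X)`:
    (q : S → Ω → ℝ)
    (hq : ∀ θ : S, q θ =ᵐ[μ]
      μ[Set.indicator {ω' | Θ ω' = θ} (fun _ => (1:ℝ)) |
        MeasurableSpace.comap X inferInstance])
    (hpos : ∀ᵐ ω ∂μ, 0 < ∫ ω', L (Y ω) (X ω') ∂μ) :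
    ∀ (θ : S) (A : Set E), MeasurableSet A →
      μ[Set.indicator {ω' | Θ ω' = θ ∧ X ω' ∈ A} (fun _ => (1:ℝ)) |
          MeasurableSpace.comap Y inferInstance]
        =ᵐ[μ]
      fun ω => (∫ ω', q θ ω' * Set.indicator A (fun _ => (1:ℝ)) (X ω') * L (Y ω) (X ω') ∂μ)
        / (∫ ω', L (Y ω) (X ω') ∂μ) :=
  stmt2_general (mΩ := mΩ) μ Θ X Y hΘ hX hY lam L hL hL0 hdens q hq
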